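/- arXiv:2605.26751 — 4 statements merged into one kernel-verified Lean document; each statement's English description precedes it below -/
import Mathlib

section
/- Let P be a symmetric positive definite real n×n matrix, and suppose the matrix inequality [[I,0],[A,B],[0,I],[C,D]]^T · diag(-P, P, [[Q,S],[S^T,R]]) · [[I,0],[A,B],[0,I],[C,D]] ≺ 0 holds (blocks conformable with A ∈ R^{n×n}, B ∈ R^{n×m}, C ∈ R^{p×n}, D ∈ R^{p×m}), where R ⪰ 0. Then A^T P A - P ≺ 0, i.e., the discrete-time system x(t+1)=Ax(t) is asymptotically stable (all eigenvalues of A have modulus less than 1). -/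
open Matrix

open scoped ComplexOrder

lemma posDef_map_complex {n : ℕ} {M : Matrix (Fin n) (Fin n) ℝ} (hM : M.PosDef) :
    (M.map (algebraMap ℝ ℂ)).PosDef := by
  have hsym : ∀ i j, M j i = M i j := fun i j => by
    have := congrFun (congrFun hM.1 i) j
    simpa [conjTranspose_apply] using this
  rw [posDef_iff_dotProduct_mulVec]
  constructor
  · exact hM.1.map (algebraMap ℝ ℂ) (fun a => by simp [Complex.conj_ofReal])
  · intro z hz
    set x : Fin n → ℝ := fun i => (z i).re with hx
    set y : Fin n → ℝ := fun i => (z i).im with hy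
    have key : star z ⬝ᵥ ((M.map (algebraMap ℝ ℂ)) *ᵥ z)
        = ((x ⬝ᵥ M *ᵥ x + y ⬝ᵥ M *ᵥ y : ℝ) : ℂ) := by
      have him : ∑ i, ∑ j, M i j * (x i * y j) = ∑ i, ∑ j, M i j * (y i * x j) := by
        rw [Finset.sum_comm]
        refine Finset.sum_congr rfl fun j _ => Finset.sum_congr rfl fun i _ => ?_
        rw [hsym i j]; ring
      have expand : star z ⬝ᵥ ((M.map (algebraMap ℝ ℂ)) *ᵥ z)
          = ∑ i, ∑ j, ((M i j : ℂ) * ((starRingEnd ℂ) (z i) * z j)) := by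
        simp only [dotProduct, mulVec, dotProduct, Pi.star_apply, map_apply, Finset.mul_sum]
        refine Finset.sum_congr rfl fun i _ => Finset.sum_congr rfl fun j _ => ?_
        simp [RCLike.star_def]; ring
      rw [expand]
      apply Complex.ext
      · simp only [Complex.re_sum, Complex.ofReal_add, dotProduct, mulVec, Finset.mul_sum,
          Complex.add_re, Complex.ofReal_re, Complex.mul_re, Complex.ofReal_im,
          Complex.conj_re, Complex.conj_im, ← Finset.sum_add_distrib]
        refine Finset.sum_congr rfl fun i _ => Finset.sum_congr rfl fun j _ => ?_
        simp [hx, hy]; ring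
      · have : (∑ i, ∑ j, ((M i j : ℂ) * ((starRingEnd ℂ) (z i) * z j))).im
            = ∑ i, ∑ j, M i j * (x i * y j) - ∑ i, ∑ j, M i j * (y i * x j) := by
          simp only [Complex.im_sum, ← Finset.sum_sub_distrib]
          refine Finset.sum_congr rfl fun i _ => Finset.sum_congr rfl fun j _ => ?_
          simp [Complex.mul_im, hx, hy]; ring
        rw [this, him]; simp
    rw [key]
    have hxy : x ≠ 0 ∨ y ≠ 0 := by
      by_contra h
      push_neg at h
      apply hz
      funext i
      have h1 := congrFun h.1 i
      have h2 := congrFun h.2 i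
      simp [hx, hy] at h1 h2
      exact Complex.ext h1 h2
    have hpos : 0 < x ⬝ᵥ M *ᵥ x + y ⬝ᵥ M *ᵥ y := by
      rcases hxy with h | h
      · have := hM.dotProduct_mulVec_pos h
        have h2 := hM.posSemidef.dotProduct_mulVec_nonneg y
        simp at this h2 ⊢
        linarith
      · have := hM.dotProduct_mulVec_pos h
        have h2 := hM.posSemidef.dotProduct_mulVec_nonneg x
        simp at this h2 ⊢
        linarith
    exact_mod_cast hpos

/-- Strict dissipativity LMI implies the Lyapunov inequality and
asymptotic stability of `x(t+1) = A x(t)`. -/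
theorem dissipativity_implies_stability
    (n m p : ℕ)
    (A : Matrix (Fin n) (Fin n) ℝ) (B : Matrix (Fin n) (Fin m) ℝ)
    (C : Matrix (Fin p) (Fin n) ℝ) (D : Matrix (Fin p) (Fin m) ℝ)
    (P : Matrix (Fin n) (Fin n) ℝ) (Q : Matrix (Fin m) (Fin m) ℝ)
    (S : Matrix (Fin m) (Fin p) ℝ) (R : Matrix (Fin p) (Fin p) ℝ)
    (hP : P.PosDef) (hPsym : P.IsSymm) (hQsym : Q.IsSymm) (hRsym : R.IsSymm)
    (hR : R.PosSemidef)
    (G : Matrix ((Fin n ⊕ Fin n) ⊕ (Fin m ⊕ Fin p)) (Fin n ⊕ Fin m) ℝ)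
    (hG : G = fromRows (fromRows (fromCols 1 0) (fromCols A B))
                       (fromRows (fromCols 0 1) (fromCols C D)))
    (Mid : Matrix ((Fin n ⊕ Fin n) ⊕ (Fin m ⊕ Fin p))
                  ((Fin n ⊕ Fin n) ⊕ (Fin m ⊕ Fin p)) ℝ)
    (hMid : Mid = fromBlocks (fromBlocks (-P) 0 0 P) 0 0 (fromBlocks Q S Sᵀ R))
    (hLMI : (-(Gᵀ * Mid * G)).PosDef) :
    (P - Aᵀ * P * A).PosDef ∧
      ∀ μ ∈ spectrum ℂ (A.map (algebraMap ℝ ℂ)), ‖μ‖ < 1 := by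
  have hLyap : (P - Aᵀ * P * A).PosDef := by
    refine PosDef.of_dotProduct_mulVec_pos ?_ ?_
    · have : (P - Aᵀ * P * A).IsSymm := by
        rw [Matrix.IsSymm, transpose_sub, transpose_mul, transpose_mul, transpose_transpose,
          hPsym.eq, ← Matrix.mul_assoc]
      rw [IsHermitian]
      simpa [conjTranspose_eq_transpose_of_trivial] using this.eq
    · intro x hx
      set v : Fin n ⊕ Fin m → ℝ := Sum.elim x 0 with hv
      have hvne : v ≠ 0 := by
        intro h
        apply hx
        funext i
        exact congrFun h (Sum.inl i)
      have hq := hLMI.dotProduct_mulVec_pos hvne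
      have hGv : G *ᵥ v = Sum.elim (Sum.elim x (A *ᵥ x)) (Sum.elim 0 (C *ᵥ x)) := by
        rw [hG, fromRows_mulVec, fromRows_mulVec, fromRows_mulVec, hv,
          fromCols_mulVec_sumElim, fromCols_mulVec_sumElim,
          fromCols_mulVec_sumElim, fromCols_mulVec_sumElim]
        simp
      have hquad : v ⬝ᵥ ((-(Gᵀ * Mid * G)) *ᵥ v)
          = x ⬝ᵥ P *ᵥ x - (A *ᵥ x) ⬝ᵥ P *ᵥ (A *ᵥ x) - (C *ᵥ x) ⬝ᵥ R *ᵥ (C *ᵥ x) := by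
        rw [neg_mulVec, dotProduct_neg, ← Matrix.mulVec_mulVec, ← Matrix.mulVec_mulVec,
          dotProduct_mulVec, vecMul_transpose, hGv, hMid,
          fromBlocks_mulVec, fromBlocks_mulVec, fromBlocks_mulVec]
        simp [sumElim_dotProduct_sumElim, neg_mulVec, dotProduct_neg]
        ring
      have hRterm : 0 ≤ (C *ᵥ x) ⬝ᵥ R *ᵥ (C *ᵥ x) := by
        have := hR.dotProduct_mulVec_nonneg (C *ᵥ x)
        simpa using this
      have hstar : star v ⬝ᵥ ((-(Gᵀ * Mid * G)) *ᵥ v) = v ⬝ᵥ ((-(Gᵀ * Mid * G)) *ᵥ v) := by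
        simp [star_trivial]
      rw [hstar, hquad] at hq
      have : x ⬝ᵥ (P - Aᵀ * P * A) *ᵥ x
          = x ⬝ᵥ P *ᵥ x - (A *ᵥ x) ⬝ᵥ P *ᵥ (A *ᵥ x) := by
        rw [sub_mulVec, dotProduct_sub, ← Matrix.mulVec_mulVec, ← Matrix.mulVec_mulVec,
          dotProduct_mulVec (x) Aᵀ, vecMul_transpose]
      have hgoal : 0 < x ⬝ᵥ (P - Aᵀ * P * A) *ᵥ x := by
        rw [this]; linarith
      simpa using hgoal
  refine ⟨hLyap, ?_⟩
  intro μ hμ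
  -- obtain eigenvector
  set Ac := A.map (algebraMap ℝ ℂ) with hAc
  rw [spectrum.mem_iff] at hμ
  have hdet : (algebraMap ℂ (Matrix (Fin n) (Fin n) ℂ) μ - Ac).det = 0 := by
    by_contra h
    exact hμ ((Matrix.isUnit_iff_isUnit_det _).mpr (isUnit_iff_ne_zero.mpr h))
  obtain ⟨v, hvne, hveq⟩ := (Matrix.exists_mulVec_eq_zero_iff).mpr hdet
  have heig : Ac *ᵥ v = μ • v := by
    have := hveq
    rw [sub_mulVec] at this
    have h2 : (algebraMap ℂ (Matrix (Fin n) (Fin n) ℂ) μ) *ᵥ v = μ • v := by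
      simp [Algebra.algebraMap_eq_smul_one, smul_mulVec]
    rw [h2] at this
    exact (sub_eq_zero.mp this).symm
  -- complexified positive definite matrices
  have hPc : (P.map (algebraMap ℝ ℂ)).PosDef := posDef_map_complex hP
  have hLc : ((P - Aᵀ * P * A).map (algebraMap ℝ ℂ)).PosDef := posDef_map_complex hLyap
  have hmapsub : (P - Aᵀ * P * A).map (algebraMap ℝ ℂ)
      = P.map (algebraMap ℝ ℂ) - Acᵀ * P.map (algebraMap ℝ ℂ) * Ac := by
    rw [hAc, ← Matrix.transpose_map]
    rw [Matrix.map_sub _ (map_sub _), ← Matrix.map_mul, ← Matrix.map_mul]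
  have hstarAc : Ac *ᵥ (star v) = star (Ac *ᵥ v) := by
    funext i
    simp [hAc, mulVec, dotProduct, map_sum, Complex.conj_ofReal, map_apply, mul_comm]
  have hterm : star v ⬝ᵥ ((Acᵀ * P.map (algebraMap ℝ ℂ) * Ac) *ᵥ v)
      = star (Ac *ᵥ v) ⬝ᵥ (P.map (algebraMap ℝ ℂ)) *ᵥ (Ac *ᵥ v) := by
    rw [← Matrix.mulVec_mulVec, ← Matrix.mulVec_mulVec, dotProduct_mulVec (star v) Acᵀ,
      vecMul_transpose, hstarAc]
  set a : ℂ := star v ⬝ᵥ (P.map (algebraMap ℝ ℂ)) *ᵥ v with ha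
  have hapos : 0 < a := hPc.dotProduct_mulVec_pos hvne
  have heigterm : star (Ac *ᵥ v) ⬝ᵥ (P.map (algebraMap ℝ ℂ)) *ᵥ (Ac *ᵥ v)
      = ((Complex.normSq μ : ℝ) : ℂ) * a := by
    rw [heig, ha]
    simp only [star_smul, smul_dotProduct, mulVec_smul, dotProduct_smul]
    rw [smul_eq_mul, smul_eq_mul, ← mul_assoc]
    congr 1
    rw [RCLike.star_def, Complex.normSq_eq_conj_mul_self, mul_comm]
  have hLpos : 0 < star v ⬝ᵥ ((P - Aᵀ * P * A).map (algebraMap ℝ ℂ)) *ᵥ v := hLc.dotProduct_mulVec_pos hvne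
  have hsplit : star v ⬝ᵥ ((P - Aᵀ * P * A).map (algebraMap ℝ ℂ)) *ᵥ v
      = (1 - (Complex.normSq μ : ℝ)) * a := by
    rw [hmapsub, sub_mulVec, dotProduct_sub, hterm, heigterm, ha]
    ring
  rw [hsplit] at hLpos
  -- extract real information
  have haim : a.im = 0 := by
    have := Complex.lt_def.mp hapos
    simpa using this.2.symm
  have hare : 0 < a.re := by
    have := Complex.lt_def.mp hapos
    simpa using this.1
  have hfin : Complex.normSq μ < 1 := by
    have h1 : ((1:ℂ) - ((Complex.normSq μ : ℝ) : ℂ)) * a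
        = (((1 - Complex.normSq μ) * a.re : ℝ) : ℂ) := by
      apply Complex.ext <;> simp [haim] <;> ring
    rw [h1] at hLpos
    have h2 : (0:ℝ) < (1 - Complex.normSq μ) * a.re := by
      have := Complex.lt_def.mp hLpos
      simpa using this.1
    nlinarith
  have := Complex.sq_norm μ
  nlinarith [norm_nonneg μ, Complex.sq_norm μ]
end

section
/- Fix symmetric matrices M, H ∈ R^{(n+r)×(n+r)} with H partitioned as [[H11,H12],[H12^T,H22]], H11 ∈ R^{n×n}. Define S_H = { Z ∈ R^{r×n} : [I;Z]^T H [I;Z] ⪰ 0 }. If H22 ≺ 0 and S_H ≠ ∅, then ([I;Z]^T M [I;Z] ≻ 0 for all Z ∈ S_H) if and only if there exists a scalar α ≥ 0 with M - αH ≻ 0. (Matrix S-lemma.) -/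
/-!
Write `ξ = (x, y)` and complete the square in `y`: with `K = H₂₂⁻¹ H₁₂ᵀ` and the Schur
complement `G = H₁₁ - H₁₂ K`, one has `ξᵀ H ξ = xᵀ G x + (y + K x)ᵀ H₂₂ (y + K x)`. So
`Z ∈ S_H` iff `vᵀ (-H₂₂) v ≤ uᵀ G u` for all `u` and `v = (Z + K) u`, and such a `Z` can be
prescribed on any single `x ≠ 0` as long as `ξᵀ H ξ ≥ 0`: by a rank-one map and Cauchy–Schwarz
when `xᵀ G x > 0`, by precomposing a point of `S_H` with the projection away from `x` otherwise.
Hence the left-hand side says that `M` is positive on the nonzero vectors of the cone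
`ξᵀ H ξ ≥ 0`, which the strict S-lemma turns into `M - α H ≻ 0`. The S-lemma follows from
Dines' theorem (the joint range of two quadratic forms is convex) and a separating line in the
plane; compactness of the unit sphere gives the strict margin, and Finsler's lemma covers the
case where `H` is nowhere positive.
-/

open Matrix

namespace SLemma

variable {d : Type*} [Fintype d]

def quadForm (A : Matrix d d ℝ) (ξ : d → ℝ) : ℝ := ξ ⬝ᵥ A *ᵥ ξ

lemma posSemidef_iff_quadForm {A : Matrix d d ℝ} :
    A.PosSemidef ↔ A.IsSymm ∧ ∀ ξ, 0 ≤ quadForm A ξ := by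
  simp [posSemidef_iff_dotProduct_mulVec, quadForm]

lemma posDef_iff_quadForm {A : Matrix d d ℝ} :
    A.PosDef ↔ A.IsSymm ∧ ∀ ξ, ξ ≠ 0 → 0 < quadForm A ξ := by
  simp [posDef_iff_dotProduct_mulVec, quadForm]

@[simp] lemma quadForm_zero (A : Matrix d d ℝ) : quadForm A 0 = 0 := by simp [quadForm]

@[simp] lemma quadForm_one [DecidableEq d] (ξ : d → ℝ) : quadForm 1 ξ = ξ ⬝ᵥ ξ := by
  simp [quadForm]

@[simp] lemma quadForm_sub (A B : Matrix d d ℝ) (ξ : d → ℝ) :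
    quadForm (A - B) ξ = quadForm A ξ - quadForm B ξ := by
  simp [quadForm, sub_mulVec]

@[simp] lemma quadForm_add_matrix (A B : Matrix d d ℝ) (ξ : d → ℝ) :
    quadForm (A + B) ξ = quadForm A ξ + quadForm B ξ := by
  simp [quadForm, add_mulVec]

@[simp] lemma quadForm_neg (A : Matrix d d ℝ) (ξ : d → ℝ) : quadForm (-A) ξ = -quadForm A ξ := by
  simp [quadForm, neg_mulVec]

@[simp] lemma quadForm_smul_matrix (c : ℝ) (A : Matrix d d ℝ) (ξ : d → ℝ) :
    quadForm (c • A) ξ = c * quadForm A ξ := by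
  simp [quadForm, smul_mulVec]

lemma quadForm_smul (A : Matrix d d ℝ) (c : ℝ) (ξ : d → ℝ) :
    quadForm A (c • ξ) = c ^ 2 * quadForm A ξ := by
  simp only [quadForm, mulVec_smul, smul_dotProduct, dotProduct_smul, smul_eq_mul]
  ring

lemma dotProduct_mulVec_comm {A : Matrix d d ℝ} (hA : A.IsSymm) (ξ η : d → ℝ) :
    ξ ⬝ᵥ A *ᵥ η = η ⬝ᵥ A *ᵥ ξ := by
  rw [dotProduct_mulVec, ← mulVec_transpose, hA.eq, dotProduct_comm]

lemma quadForm_add {A : Matrix d d ℝ} (hA : A.IsSymm) (ξ η : d → ℝ) :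
    quadForm A (ξ + η) = quadForm A ξ + 2 * (ξ ⬝ᵥ A *ᵥ η) + quadForm A η := by
  simp only [quadForm, mulVec_add, dotProduct_add, add_dotProduct]
  rw [dotProduct_mulVec_comm hA η ξ]
  ring

lemma continuous_quadForm (A : Matrix d d ℝ) : Continuous (quadForm A) := by
  unfold quadForm
  fun_prop

lemma sq_dotProduct_mulVec_le {A : Matrix d d ℝ} (hA : A.PosSemidef) (ξ η : d → ℝ) :
    (ξ ⬝ᵥ A *ᵥ η) ^ 2 ≤ quadForm A ξ * quadForm A η := by
  have hsymm := (posSemidef_iff_quadForm.1 hA).1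
  have hquad : ∀ t : ℝ,
      0 ≤ quadForm A η * (t * t) + 2 * (ξ ⬝ᵥ A *ᵥ η) * t + quadForm A ξ := fun t => by
    have := (posSemidef_iff_quadForm.1 hA).2 (ξ + t • η)
    rw [quadForm_add hsymm, quadForm_smul, mulVec_smul, dotProduct_smul, smul_eq_mul] at this
    linarith
  have := discrim_le_zero hquad
  rw [discrim] at this
  nlinarith

lemma dotProduct_self_pos {ξ : d → ℝ} (hξ : ξ ≠ 0) : 0 < ξ ⬝ᵥ ξ := by
  simpa using dotProduct_star_self_pos_iff.2 hξ

lemma isCompact_unitSphere : IsCompact {ξ : d → ℝ | ξ ⬝ᵥ ξ = 1} := by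
  refine (isCompact_closedBall (0 : d → ℝ) 1).of_isClosed_subset
    (isClosed_eq (by unfold dotProduct; fun_prop) continuous_const) fun ξ hξ => ?_
  rw [mem_closedBall_zero_iff, pi_norm_le_iff_of_nonneg zero_le_one]
  intro i
  rw [Real.norm_eq_abs, abs_le_one_iff_mul_self_le_one, ← hξ.out]
  exact Finset.single_le_sum (fun j _ => mul_self_nonneg (ξ j)) (Finset.mem_univ i)

lemma mul_dotProduct_self_le_quadForm {T : Set (d → ℝ)} (hT : ∀ ξ ∈ T, ∀ c : ℝ, c • ξ ∈ T)
    (B : Matrix d d ℝ) {a : ℝ} (h : ∀ ξ ∈ T, ξ ⬝ᵥ ξ = 1 → a ≤ quadForm B ξ) :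
    ∀ ξ ∈ T, a * (ξ ⬝ᵥ ξ) ≤ quadForm B ξ := by
  intro ξ hξ
  rcases eq_or_ne ξ 0 with rfl | hξ0
  · simp
  have hpos := dotProduct_self_pos hξ0
  set c := (Real.sqrt (ξ ⬝ᵥ ξ))⁻¹
  have hc : c ^ 2 * (ξ ⬝ᵥ ξ) = 1 := by
    rw [inv_pow, Real.sq_sqrt hpos.le, inv_mul_cancel₀ hpos.ne']
  have := h (c • ξ) (hT ξ hξ c) (by simpa [smul_dotProduct, dotProduct_smul, ← mul_assoc, ← sq])
  rw [quadForm_smul] at this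
  calc a * (ξ ⬝ᵥ ξ) ≤ c ^ 2 * quadForm B ξ * (ξ ⬝ᵥ ξ) := mul_le_mul_of_nonneg_right this hpos.le
    _ = quadForm B ξ := by linear_combination quadForm B ξ * hc

lemma exists_pos_mul_le_quadForm {T : Set (d → ℝ)} (hTc : IsClosed T)
    (hT : ∀ ξ ∈ T, ∀ c : ℝ, c • ξ ∈ T) {B : Matrix d d ℝ}
    (h : ∀ ξ ∈ T, ξ ≠ 0 → 0 < quadForm B ξ) :
    ∃ δ > 0, ∀ ξ ∈ T, δ * (ξ ⬝ᵥ ξ) ≤ quadForm B ξ := by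
  obtain ⟨δ, hδ, hle⟩ := (isCompact_unitSphere.inter_left hTc).exists_forall_le'
    (continuous_quadForm B).continuousOn fun ξ hξ =>
      h ξ hξ.1 fun h0 => by simpa [h0] using hξ.2
  exact ⟨δ, hδ, mul_dotProduct_self_le_quadForm hT B fun ξ hξ h1 => hle ξ ⟨hξ, h1⟩⟩

lemma exists_mul_le_quadForm (B : Matrix d d ℝ) : ∃ m, ∀ ξ, m * (ξ ⬝ᵥ ξ) ≤ quadForm B ξ := by
  obtain ⟨m, hm⟩ := (isCompact_unitSphere.image (continuous_quadForm B)).bddBelow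
  exact ⟨m, fun ξ => mul_dotProduct_self_le_quadForm (T := Set.univ) (fun _ _ _ => trivial) B
    (fun η _ hη => hm ⟨η, hη, rfl⟩) ξ trivial⟩

/-- Finsler's lemma. -/
lemma exists_posDef_add_smul {A B : Matrix d d ℝ} (hA : A.PosSemidef) (hB : B.IsSymm)
    (h : ∀ ξ, ξ ≠ 0 → A *ᵥ ξ = 0 → 0 < quadForm B ξ) :
    ∃ t : ℝ, 0 ≤ t ∧ (B + t • A).PosDef := by
  have hA' := posSemidef_iff_quadForm.1 hA
  obtain ⟨m, hm⟩ := exists_mul_le_quadForm B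
  obtain ⟨δ, hδ, hgap⟩ := exists_pos_mul_le_quadForm (T := {ξ | quadForm B ξ ≤ 0})
    (isClosed_le (continuous_quadForm B) continuous_const)
    (fun ξ hξ c => by
      simpa [quadForm_smul] using mul_nonpos_of_nonneg_of_nonpos (sq_nonneg c) hξ)
    (B := A) fun ξ hξ hξ0 => (hA'.2 ξ).lt_of_ne fun h0 =>
      (h ξ hξ0 ((hA.dotProduct_mulVec_zero_iff ξ).1 (by simpa [quadForm] using h0.symm))).not_ge
        hξ
  refine ⟨(|m| + 1) / δ, by positivity,
    posDef_iff_quadForm.2 ⟨hB.add (hA'.1.smul _), fun ξ hξ => ?_⟩⟩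
  rw [quadForm_add_matrix, quadForm_smul_matrix]
  have hpos := dotProduct_self_pos hξ
  rcases lt_or_ge 0 (quadForm B ξ) with hBξ | hBξ
  · have := mul_nonneg (by positivity : 0 ≤ (|m| + 1) / δ) (hA'.2 ξ)
    linarith
  · have hA_ge : (|m| + 1) * (ξ ⬝ᵥ ξ) ≤ (|m| + 1) / δ * quadForm A ξ :=
      calc (|m| + 1) * (ξ ⬝ᵥ ξ) = (|m| + 1) / δ * (δ * (ξ ⬝ᵥ ξ)) := by field_simp
        _ ≤ _ := mul_le_mul_of_nonneg_left (hgap ξ hBξ) (by positivity)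
    nlinarith [hm ξ, mul_le_mul_of_nonneg_right (neg_abs_le m) hpos.le]

lemma exists_sq_eq_one_sub_mul_one_sub (p q : ℝ) : ∃ z : ℝ,
    0 ≤ 1 - 2 * p * z ∧ 0 ≤ 1 - 2 * q * z ∧ (1 - 2 * p * z) * (1 - 2 * q * z) = z ^ 2 := by
  wlog h : |q| ≤ |p| generalizing p q
  · obtain ⟨z, hp, hq, hz⟩ := this q p (le_of_not_ge h)
    exact ⟨z, hq, hp, by rw [mul_comm, hz]⟩
  rcases eq_or_ne p 0 with rfl | hp
  · obtain rfl : q = 0 := by simpa using h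
    exact ⟨1, by norm_num, by norm_num, by norm_num⟩
  set k := q / p
  have hk : |k| ≤ 1 := by rwa [abs_div, div_le_one (abs_pos.2 hp)]
  -- the substitution `z = w / (2 p)` turns the root into a zero on `[0, 1]`
  obtain ⟨w, ⟨hw0, hw1⟩, hw⟩ : ∃ w ∈ Set.Icc (0 : ℝ) 1,
      (1 - w) * (1 - k * w) - (w / (2 * p)) ^ 2 = 0 :=
    intermediate_value_Icc' zero_le_one (by fun_prop) ⟨by norm_num; positivity, by norm_num⟩
  have hkw : 0 ≤ 1 - k * w := by nlinarith [abs_le.1 hk]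
  have hpz : 1 - 2 * p * (w / (2 * p)) = 1 - w := by field_simp
  have hqz : 1 - 2 * q * (w / (2 * p)) = 1 - k * w := by simp only [k]; field_simp
  exact ⟨w / (2 * p), by rw [hpz]; linarith, by rwa [hqz], by rw [hpz, hqz]; linarith⟩

lemma exists_sq_add_mul_eq_one (p q : ℝ) :
    ∃ s t : ℝ, s ^ 2 + 2 * (s * t) * p = 1 ∧ t ^ 2 + 2 * (s * t) * q = 1 := by
  obtain ⟨z, hpz, hqz, hz⟩ := exists_sq_eq_one_sub_mul_one_sub p q
  have hpz' : 1 - 2 * p * z ≠ 0 := fun h0 => by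
    obtain rfl : z = 0 := pow_eq_zero_iff two_ne_zero |>.1 (by rw [← hz, h0, zero_mul])
    norm_num at h0
  set s := Real.sqrt (1 - 2 * p * z)
  have hs2 : s ^ 2 = 1 - 2 * p * z := Real.sq_sqrt hpz
  have hs : s ≠ 0 := fun h0 => hpz' (by rw [← hs2, h0]; ring)
  refine ⟨s, z / s, ?_, ?_⟩
  · rw [mul_div_cancel₀ _ hs, hs2]; ring
  · rw [mul_div_cancel₀ _ hs, div_pow, hs2, ← hz]
    field_simp
    ring

def jointRange (A B : Matrix d d ℝ) : Set (ℝ × ℝ) :=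
  Set.range fun ξ => (quadForm A ξ, quadForm B ξ)

lemma smul_mem_jointRange {A B : Matrix d d ℝ} {x : ℝ × ℝ} (hx : x ∈ jointRange A B) {c : ℝ}
    (hc : 0 ≤ c) : c • x ∈ jointRange A B := by
  obtain ⟨ξ, rfl⟩ := hx
  exact ⟨Real.sqrt c • ξ, by simp [quadForm_smul, Real.sq_sqrt hc]⟩

lemma add_mem_of_det_eq_zero {S : Set (ℝ × ℝ)} (hS : ∀ x ∈ S, ∀ c : ℝ, 0 ≤ c → c • x ∈ S)
    {x y : ℝ × ℝ} (hx : x ∈ S) (hy : y ∈ S) (hdet : x.1 * y.2 - x.2 * y.1 = 0) : x + y ∈ S := by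
  rcases eq_or_ne x 0 with rfl | hx0
  · simpa using hy
  have hnorm : 0 < x.1 ^ 2 + x.2 ^ 2 := by
    by_contra! h
    exact hx0 (Prod.ext (by rw [Prod.fst_zero]; nlinarith [sq_nonneg x.1, sq_nonneg x.2])
      (by rw [Prod.snd_zero]; nlinarith [sq_nonneg x.1, sq_nonneg x.2]))
  set c := (x.1 * y.1 + x.2 * y.2) / (x.1 ^ 2 + x.2 ^ 2)
  have hyx : y = c • x := by
    ext <;> simp only [c, Prod.smul_fst, Prod.smul_snd, smul_eq_mul] <;> field_simp
    · linear_combination -x.2 * hdet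
    · linear_combination x.1 * hdet
  rcases le_or_gt 0 (1 + c) with hc | hc
  · have : x + y = (1 + c) • x := by rw [hyx, add_smul, one_smul]
    exact this ▸ hS x hx _ hc
  · have hc0 : c ≠ 0 := by linarith
    have : x + y = ((1 + c) / c) • y := by
      rw [hyx, smul_smul, div_mul_cancel₀ _ hc0, add_smul, one_smul]
    exact this ▸ hS y hy _ (div_nonneg_of_nonpos hc.le (by linarith))

lemma exists_eq_smul_add_smul {u v : ℝ × ℝ} (h : u.1 * v.2 - u.2 * v.1 ≠ 0) (b : ℝ × ℝ) :
    ∃ p q : ℝ, b = p • u + q • v :=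
  ⟨(b.1 * v.2 - b.2 * v.1) / (u.1 * v.2 - u.2 * v.1),
    (u.1 * b.2 - u.2 * b.1) / (u.1 * v.2 - u.2 * v.1), by
      ext <;> simp only [Prod.fst_add, Prod.snd_add, Prod.smul_fst, Prod.smul_snd, smul_eq_mul] <;>
        rw [div_mul_eq_mul_div, div_mul_eq_mul_div, ← add_div, eq_div_iff h] <;> ring⟩

lemma quadForm_smul_add_smul {A : Matrix d d ℝ} (hA : A.IsSymm) (s t : ℝ) (ξ η : d → ℝ) :
    quadForm A (s • ξ + t • η) =
      s ^ 2 * quadForm A ξ + 2 * (s * t) * (ξ ⬝ᵥ A *ᵥ η) + t ^ 2 * quadForm A η := by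
  rw [quadForm_add hA, quadForm_smul, quadForm_smul, mulVec_smul, smul_dotProduct,
    dotProduct_smul, smul_eq_mul, smul_eq_mul]
  ring

lemma add_mem_jointRange {A B : Matrix d d ℝ} (hA : A.IsSymm) (hB : B.IsSymm) {x y : ℝ × ℝ}
    (hx : x ∈ jointRange A B) (hy : y ∈ jointRange A B) : x + y ∈ jointRange A B := by
  by_cases hdet : x.1 * y.2 - x.2 * y.1 = 0
  · exact add_mem_of_det_eq_zero (fun _ hz _ hc => smul_mem_jointRange hz hc) hx hy hdet
  obtain ⟨ξ, rfl⟩ := hx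
  obtain ⟨η, rfl⟩ := hy
  -- write the cross terms in the basis of `x, y` and solve for `ζ = s ξ + t η`
  obtain ⟨p, q, hpq⟩ := exists_eq_smul_add_smul hdet (ξ ⬝ᵥ A *ᵥ η, ξ ⬝ᵥ B *ᵥ η)
  simp only [Prod.ext_iff, Prod.fst_add, Prod.snd_add, Prod.smul_fst, Prod.smul_snd,
    smul_eq_mul] at hpq
  obtain ⟨s, t, hs, ht⟩ := exists_sq_add_mul_eq_one p q
  refine ⟨s • ξ + t • η, ?_⟩
  simp only [Prod.mk_add_mk, Prod.mk.injEq, quadForm_smul_add_smul hA, quadForm_smul_add_smul hB,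
    hpq.1, hpq.2]
  constructor
  · linear_combination quadForm A ξ * hs + quadForm A η * ht
  · linear_combination quadForm B ξ * hs + quadForm B η * ht

/-- Dines' theorem. -/
lemma convex_jointRange {A B : Matrix d d ℝ} (hA : A.IsSymm) (hB : B.IsSymm) :
    Convex ℝ (jointRange A B) := fun _ hx _ hy _ _ ha hb _ =>
  add_mem_jointRange hA hB (smul_mem_jointRange hx ha) (smul_mem_jointRange hy hb)

lemma nonpos_and_nonneg_of_forall_mul_lt_mul {a b : ℝ}
    (h : ∀ s t : ℝ, 0 < s → 0 < t → s * a < t * b) : a ≤ 0 ∧ 0 ≤ b ∧ a < b := by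
  have hab : a < b := by simpa using h 1 1 one_pos one_pos
  refine ⟨?_, ?_, hab⟩
  · by_contra! ha
    linarith [h b a (by linarith) ha, mul_comm a b]
  · by_contra! hb
    linarith [h (-b) (-a) (by linarith) (by linarith), mul_comm a b]

lemma nonneg_of_forall_le_mul {u y : ℝ} (hu : u ≤ 0) (h : ∀ c : ℝ, 0 ≤ c → u ≤ c * y) : 0 ≤ y := by
  by_contra! hy
  have := h ((u - 1) / y) (div_nonneg_of_nonpos (by linarith) hy.le)
  rw [div_mul_cancel₀ _ hy.ne] at this
  linarith

theorem s_lemma {A B : Matrix d d ℝ} (hA : A.IsSymm) (hB : B.IsSymm)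
    (hslater : ∃ ξ, 0 < quadForm A ξ) (h : ∀ ξ, 0 ≤ quadForm A ξ → 0 ≤ quadForm B ξ) :
    ∃ α : ℝ, 0 ≤ α ∧ ∀ ξ, α * quadForm A ξ ≤ quadForm B ξ := by
  set Q : Set (ℝ × ℝ) := Set.Ioi 0 ×ˢ Set.Iio 0
  have hdisj : Disjoint Q (jointRange A B) := by
    rintro _ hQx hDx _ hx
    obtain ⟨ξ, rfl⟩ := hDx hx
    exact (h ξ (hQx hx).1.le).not_gt (hQx hx).2
  obtain ⟨f, u, hfQ, hfD⟩ := geometric_hahn_banach_open ((convex_Ioi 0).prod (convex_Iio 0))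
    (isOpen_Ioi.prod isOpen_Iio) (convex_jointRange hA hB) hdisj
  have hf : ∀ x : ℝ × ℝ, f x = x.1 * f (1, 0) + x.2 * f (0, 1) := fun x => by
    conv_lhs => rw [show x = x.1 • ((1, 0) : ℝ × ℝ) + x.2 • (0, 1) by ext <;> simp]
    rw [map_add, map_smul, map_smul, smul_eq_mul, smul_eq_mul]
  have hu : u ≤ 0 := by simpa using hfD 0 ⟨0, by simp⟩
  have hfD' : ∀ ξ, 0 ≤ quadForm A ξ * f (1, 0) + quadForm B ξ * f (0, 1) := fun ξ => by
    refine nonneg_of_forall_le_mul hu fun c hc => ?_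
    have := hfD _ (smul_mem_jointRange ⟨ξ, rfl⟩ hc)
    rw [map_smul, smul_eq_mul, hf] at this
    exact this
  obtain ⟨ha, hb, hab⟩ := nonpos_and_nonneg_of_forall_mul_lt_mul (a := f (1, 0)) (b := f (0, 1))
    fun s t hs ht => by
      have := hfQ (s, -t) ⟨hs, neg_lt_zero.2 ht⟩
      rw [hf] at this
      linarith
  obtain ⟨ξ₀, hξ₀⟩ := hslater
  have hb0 : 0 < f (0, 1) := hb.lt_of_ne fun hb0 => by
    have := hfD' ξ₀
    rw [← hb0, mul_zero, add_zero] at this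
    nlinarith
  refine ⟨-f (1, 0) / f (0, 1), div_nonneg (neg_nonneg.2 ha) hb, fun ξ => ?_⟩
  rw [div_mul_eq_mul_div, div_le_iff₀ hb0]
  linarith [hfD' ξ]

theorem s_lemma_strict [DecidableEq d] {A B : Matrix d d ℝ} (hA : A.IsSymm) (hB : B.IsSymm)
    (h : ∀ ξ, ξ ≠ 0 → 0 ≤ quadForm A ξ → 0 < quadForm B ξ) :
    ∃ α : ℝ, 0 ≤ α ∧ (B - α • A).PosDef := by
  by_cases hslater : ∃ ξ, 0 < quadForm A ξ
  · obtain ⟨δ, hδ, hgap⟩ := exists_pos_mul_le_quadForm (T := {ξ | 0 ≤ quadForm A ξ})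
      (isClosed_le continuous_const (continuous_quadForm A))
      (fun ξ hξ c => by rw [Set.mem_ofPred_eq, quadForm_smul]; exact mul_nonneg (sq_nonneg c) hξ)
      fun ξ hξ hξ0 => h ξ hξ0 hξ
    obtain ⟨α, hα, hle⟩ := s_lemma hA (hB.sub (isSymm_one.smul δ)) hslater fun ξ hξ => by
      simpa using hgap ξ hξ
    refine ⟨α, hα, posDef_iff_quadForm.2 ⟨hB.sub (hA.smul α), fun ξ hξ => ?_⟩⟩
    have := hle ξ
    simp only [quadForm_sub, quadForm_smul_matrix, quadForm_one] at this ⊢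
    nlinarith [dotProduct_self_pos hξ]
  · push Not at hslater
    have hA' : (-A).PosSemidef :=
      posSemidef_iff_quadForm.2 ⟨hA.neg, fun ξ => by simpa using hslater ξ⟩
    obtain ⟨t, ht, hpos⟩ := exists_posDef_add_smul hA' hB fun ξ hξ hAξ =>
      h ξ hξ (by rw [neg_mulVec, neg_eq_zero] at hAξ; simp [quadForm, hAξ])
    exact ⟨t, ht, by simpa [sub_eq_add_neg] using hpos⟩

section Completion

variable {m o : Type*} [Fintype m] [Fintype o]

lemma quadForm_transpose_mul_mul (H : Matrix o o ℝ) (P : Matrix o m ℝ) (x : m → ℝ) :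
    quadForm (Pᵀ * H * P) x = quadForm H (P *ᵥ x) := by
  rw [quadForm, quadForm, ← mulVec_mulVec, ← mulVec_mulVec, dotProduct_mulVec x Pᵀ,
    vecMul_transpose]

omit [Fintype m] in
lemma isSymm_transpose_mul_mul {H : Matrix o o ℝ} (hH : H.IsSymm) (P : Matrix o m ℝ) :
    (Pᵀ * H * P).IsSymm := by
  simp [IsSymm, transpose_mul, hH.eq, Matrix.mul_assoc]

lemma posSemidef_transpose_mul_mul_iff {H : Matrix o o ℝ} (hH : H.IsSymm) (P : Matrix o m ℝ) :
    (Pᵀ * H * P).PosSemidef ↔ ∀ x, 0 ≤ quadForm H (P *ᵥ x) := by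
  simp [posSemidef_iff_quadForm, quadForm_transpose_mul_mul, isSymm_transpose_mul_mul hH]

lemma posDef_transpose_mul_mul_iff {H : Matrix o o ℝ} (hH : H.IsSymm) (P : Matrix o m ℝ) :
    (Pᵀ * H * P).PosDef ↔ ∀ x, x ≠ 0 → 0 < quadForm H (P *ᵥ x) := by
  simp [posDef_iff_quadForm, quadForm_transpose_mul_mul, isSymm_transpose_mul_mul hH]

variable {G : Matrix m m ℝ} {N : Matrix o o ℝ}

lemma exists_mulVec_eq_of_quadForm_pos (hG : G.PosSemidef)
    {x : m → ℝ} (hx : 0 < quadForm G x) {w : o → ℝ} (hw : quadForm N w ≤ quadForm G x) :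
    ∃ W : Matrix o m ℝ, W *ᵥ x = w ∧ ∀ u, quadForm N (W *ᵥ u) ≤ quadForm G u := by
  have hGsymm := (posSemidef_iff_quadForm.1 hG).1
  have hWu : ∀ u, ((quadForm G x)⁻¹ • vecMulVec w (G *ᵥ x)) *ᵥ u =
      ((x ⬝ᵥ G *ᵥ u) / quadForm G x) • w := fun u => by
    rw [smul_mulVec, vecMulVec_mulVec, dotProduct_comm, dotProduct_mulVec_comm hGsymm,
      op_smul_eq_smul, smul_smul, inv_mul_eq_div]
  refine ⟨(quadForm G x)⁻¹ • vecMulVec w (G *ᵥ x), ?_, fun u => ?_⟩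
  · rw [hWu, ← quadForm, div_self hx.ne', one_smul]
  · rw [hWu, quadForm_smul, div_pow]
    calc (x ⬝ᵥ G *ᵥ u) ^ 2 / quadForm G x ^ 2 * quadForm N w
        ≤ (x ⬝ᵥ G *ᵥ u) ^ 2 / quadForm G x ^ 2 * quadForm G x :=
          mul_le_mul_of_nonneg_left hw (by positivity)
      _ = (x ⬝ᵥ G *ᵥ u) ^ 2 / quadForm G x := by field_simp
      _ ≤ quadForm G u := by
          rw [div_le_iff₀' hx]; exact sq_dotProduct_mulVec_le hG x u

lemma exists_mulVec_eq_zero_of_quadForm_eq_zero [DecidableEq m] (hG : G.PosSemidef)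
    {W₀ : Matrix o m ℝ} (hW₀ : ∀ u, quadForm N (W₀ *ᵥ u) ≤ quadForm G u)
    {x : m → ℝ} (hx : x ≠ 0) (hx0 : quadForm G x = 0) :
    ∃ W : Matrix o m ℝ, W *ᵥ x = 0 ∧ ∀ u, quadForm N (W *ᵥ u) ≤ quadForm G u := by
  have hGx : G *ᵥ x = 0 := (hG.dotProduct_mulVec_zero_iff x).1 (by simpa [quadForm] using hx0)
  -- `R` projects away from `x`, a null direction of `G`, so it preserves `quadForm G`
  set R : Matrix m m ℝ := 1 - (x ⬝ᵥ x)⁻¹ • vecMulVec x x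
  have hRu : ∀ u, R *ᵥ u = u + (-((x ⬝ᵥ x)⁻¹ * (x ⬝ᵥ u))) • x := fun u => by
    rw [sub_mulVec, one_mulVec, smul_mulVec, vecMulVec_mulVec, op_smul_eq_smul, smul_smul,
      neg_smul, sub_eq_add_neg]
  have hGR : ∀ u, quadForm G (R *ᵥ u) = quadForm G u := fun u => by
    rw [hRu, quadForm_add (posSemidef_iff_quadForm.1 hG).1, quadForm_smul, hx0, mulVec_smul, hGx]
    simp
  refine ⟨W₀ * R, ?_, fun u => ?_⟩
  · rw [← mulVec_mulVec, hRu, inv_mul_cancel₀ (dotProduct_self_pos hx).ne', neg_smul,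
      one_smul, add_neg_cancel, mulVec_zero]
  · rw [← mulVec_mulVec, ← hGR u]
    exact hW₀ _

lemma exists_mulVec_eq [DecidableEq m] (hG : G.PosSemidef) (hN : N.PosDef)
    {W₀ : Matrix o m ℝ} (hW₀ : ∀ u, quadForm N (W₀ *ᵥ u) ≤ quadForm G u)
    {x : m → ℝ} (hx : x ≠ 0) {w : o → ℝ} (hw : quadForm N w ≤ quadForm G x) :
    ∃ W : Matrix o m ℝ, W *ᵥ x = w ∧ ∀ u, quadForm N (W *ᵥ u) ≤ quadForm G u := by
  have hN' := posDef_iff_quadForm.1 hN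
  rcases ((posSemidef_iff_quadForm.1 hG).2 x).eq_or_lt with hx0 | hx0
  · obtain rfl : w = 0 := by
      by_contra hw0
      linarith [hN'.2 w hw0]
    exact exists_mulVec_eq_zero_of_quadForm_eq_zero hG hW₀ hx hx0.symm
  · exact exists_mulVec_eq_of_quadForm_pos hG hx0 hw

end Completion

section Block

variable {m o : Type*} [Fintype m] [Fintype o] [DecidableEq m] [DecidableEq o]

omit [DecidableEq m] in
lemma quadForm_fromBlocks (A : Matrix m m ℝ) (B : Matrix m o ℝ) {D : Matrix o o ℝ} (hD : D.IsSymm)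
    [Invertible D] (x : m → ℝ) (y : o → ℝ) :
    quadForm (fromBlocks A B Bᵀ D) (Sum.elim x y) =
      quadForm (A - B * D⁻¹ * Bᵀ) x + quadForm D ((D⁻¹ * Bᵀ) *ᵥ x + y) := by
  have := schur_complement_eq₂₂ A B x y (isHermitian_iff_isSymm.2 hD)
  simp only [conjTranspose_eq_transpose_of_trivial, star_trivial, ← dotProduct_mulVec] at this
  rw [quadForm, quadForm, quadForm, this, add_comm]

/-- The set `S_H` of the paper. -/
def feasibleSet (H : Matrix (m ⊕ o) (m ⊕ o) ℝ) : Set (Matrix o m ℝ) :=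
  {Z | ((fromRows (1 : Matrix m m ℝ) Z)ᵀ * H * fromRows 1 Z).PosSemidef}

lemma exists_fromRows_mulVec_eq {A : Matrix m m ℝ} {B : Matrix m o ℝ} {D : Matrix o o ℝ}
    (hA : A.IsSymm) (hD : (-D).PosDef) {Z₀ : Matrix o m ℝ}
    (hZ₀ : Z₀ ∈ feasibleSet (fromBlocks A B Bᵀ D)) {ξ : m ⊕ o → ℝ} (hξ : ξ ≠ 0)
    (hHξ : 0 ≤ quadForm (fromBlocks A B Bᵀ D) ξ) :
    ∃ Z ∈ feasibleSet (fromBlocks A B Bᵀ D), ∃ x ≠ 0, fromRows 1 Z *ᵥ x = ξ := by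
  have hD' := posDef_iff_quadForm.1 hD
  have hDsymm : D.IsSymm := by simpa using hD'.1.neg
  have : Invertible D := (neg_neg D ▸ hD.isUnit.neg).invertible
  have hsplit := quadForm_fromBlocks A B hDsymm
  set K := D⁻¹ * Bᵀ
  set G := A - B * D⁻¹ * Bᵀ
  have hmem : ∀ Z, Z ∈ feasibleSet (fromBlocks A B Bᵀ D) ↔
      ∀ u, quadForm (-D) ((K + Z) *ᵥ u) ≤ quadForm G u := fun Z =>
    (posSemidef_transpose_mul_mul_iff (hA.fromBlocks rfl hDsymm) _).trans <| by
      simp only [fromRows_mulVec, one_mulVec, hsplit, add_mulVec, quadForm_neg,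
        neg_le_iff_add_nonneg]
  have hGsymm : G.IsSymm := hA.sub (by simp [IsSymm, transpose_mul, transpose_nonsing_inv,
    hDsymm.eq, Matrix.mul_assoc])
  have hG : G.PosSemidef := posSemidef_iff_quadForm.2
    ⟨hGsymm, fun u => (hD.posSemidef.dotProduct_mulVec_nonneg _).trans ((hmem Z₀).1 hZ₀ u)⟩
  obtain ⟨x, y, rfl⟩ : ∃ x y, ξ = Sum.elim x y := ⟨_, _, (Sum.elim_comp_inl_inr ξ).symm⟩
  rw [hsplit] at hHξ
  have hx : x ≠ 0 := by
    rintro rfl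
    obtain rfl : y = 0 := by
      by_contra hy
      simp only [quadForm_zero, mulVec_zero, zero_add] at hHξ
      linarith [quadForm_neg D y ▸ hD'.2 y hy]
    exact hξ Sum.elim_zero_zero
  obtain ⟨W, hWx, hW⟩ := exists_mulVec_eq hG hD ((hmem Z₀).1 hZ₀) hx (w := K *ᵥ x + y)
    (by rw [quadForm_neg]; linarith)
  refine ⟨W - K, (hmem _).2 (by simpa using hW), x, hx, ?_⟩
  rw [fromRows_mulVec, one_mulVec, sub_mulVec, hWx, add_sub_cancel_left]

end Block

end SLemma

open SLemma

/-- Matrix S-lemma (Theorem 1 in the paper). -/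
theorem matrix_S_lemma
    (n r : ℕ)
    (M : Matrix (Fin n ⊕ Fin r) (Fin n ⊕ Fin r) ℝ) (hM : M.IsSymm)
    (H11 : Matrix (Fin n) (Fin n) ℝ) (H12 : Matrix (Fin n) (Fin r) ℝ)
    (H22 : Matrix (Fin r) (Fin r) ℝ)
    (hH11 : H11.IsSymm) (hH22 : H22.IsSymm)
    (H : Matrix (Fin n ⊕ Fin r) (Fin n ⊕ Fin r) ℝ)
    (hH : H = fromBlocks H11 H12 H12ᵀ H22)
    (hH22neg : (-H22).PosDef)
    (hne : ∃ Z : Matrix (Fin r) (Fin n) ℝ,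
      ((fromRows (1 : Matrix (Fin n) (Fin n) ℝ) Z)ᵀ * H *
        fromRows 1 Z).PosSemidef) :
    (∀ Z : Matrix (Fin r) (Fin n) ℝ,
        ((fromRows (1 : Matrix (Fin n) (Fin n) ℝ) Z)ᵀ * H *
          fromRows 1 Z).PosSemidef →
        ((fromRows (1 : Matrix (Fin n) (Fin n) ℝ) Z)ᵀ * M *
          fromRows 1 Z).PosDef)
      ↔ ∃ α : ℝ, 0 ≤ α ∧ (M - α • H).PosDef := by
  subst hH
  have hHsymm : (fromBlocks H11 H12 H12ᵀ H22).IsSymm := hH11.fromBlocks rfl hH22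
  obtain ⟨Z₀, hZ₀⟩ := hne
  constructor
  · intro hpos
    refine s_lemma_strict hHsymm hM fun ξ hξ hHξ => ?_
    obtain ⟨Z, hZ, x, hx, rfl⟩ := exists_fromRows_mulVec_eq hH11 hH22neg hZ₀ hξ hHξ
    exact (posDef_transpose_mul_mul_iff hM _).1 (hpos Z hZ) x hx
  · rintro ⟨α, hα, hMH⟩ Z hZ
    refine (posDef_transpose_mul_mul_iff hM _).2 fun x hx => ?_
    have h1 := (posDef_iff_quadForm.1 hMH).2 (fromRows 1 Z *ᵥ x)
      fun h => hx (by simpa using congrArg (· ∘ Sum.inl) h)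
    have h2 := (posSemidef_transpose_mul_mul_iff hHsymm _).1 hZ x
    rw [quadForm_sub, quadForm_smul_matrix] at h1
    nlinarith [mul_nonneg hα h2]
end

section
/- Let H = [[H11,H12],[H12^T,H22]] be a real symmetric (n+r)×(n+r) matrix with H22 ≺ 0. Then the set S_H = { Z ∈ R^{r×n} : [I;Z]^T H [I;Z] ⪰ 0 } is bounded (with respect to any matrix norm on R^{r×n}). -/
/-!
Testing the semidefinite matrix `[I; Z]ᵀ H [I; Z]` against the `j`-th unit vector gives, for the
`j`-th column `z` of `Z`, the inequality `zᵀ (-H₂₂) z ≤ (H₁₁)ⱼⱼ + 2 (H₁₂ᵀ eⱼ) ⬝ z`. As `-H₂₂` is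
positive definite, its quadratic form dominates `m ‖z‖²` for some `m > 0` (its minimum on the
compact unit sphere), and a quadratic lower bound that stays below a linear upper bound confines
`z` to a ball.
-/

open Matrix

section
variable {ι : Type*} [Fintype ι]

theorem Matrix.abs_dotProduct_le_sum_abs_mul_norm (b z : ι → ℝ) :
    |b ⬝ᵥ z| ≤ (∑ i, |b i|) * ‖z‖ := by
  rw [Finset.sum_mul]
  refine (Finset.abs_sum_le_sum_abs _ _).trans (Finset.sum_le_sum fun i _ => ?_)
  rw [abs_mul]
  exact mul_le_mul_of_nonneg_left (norm_le_pi_norm z i) (abs_nonneg _)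

theorem Matrix.PosDef.exists_pos_mul_sq_norm_le {N : Matrix ι ι ℝ} (hN : N.PosDef) :
    ∃ m > 0, ∀ z : ι → ℝ, m * ‖z‖ ^ 2 ≤ z ⬝ᵥ N *ᵥ z := by
  cases isEmpty_or_nonempty ι
  · exact ⟨1, one_pos, fun z => by simp [Subsingleton.elim z 0]⟩
  obtain ⟨u, hu, hmin⟩ := (isCompact_sphere (0 : ι → ℝ) 1).exists_isMinOn
    (NormedSpace.sphere_nonempty.mpr zero_le_one)
    (Continuous.continuousOn (f := fun z : ι → ℝ => z ⬝ᵥ N *ᵥ z) (by fun_prop))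
  have hu₀ : u ≠ 0 := ne_zero_of_mem_unit_sphere ⟨u, hu⟩
  refine ⟨u ⬝ᵥ N *ᵥ u, by simpa using hN.dotProduct_mulVec_pos hu₀, fun z => ?_⟩
  rcases eq_or_ne z 0 with rfl | hz
  · simp
  have hz' : 0 < ‖z‖ := norm_pos_iff.mpr hz
  have hscale : z ⬝ᵥ N *ᵥ z = ‖z‖ ^ 2 * ((‖z‖⁻¹ • z) ⬝ᵥ N *ᵥ (‖z‖⁻¹ • z)) := by
    simp only [mulVec_smul, dotProduct_smul, smul_dotProduct, smul_eq_mul]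
    field_simp
  rw [hscale, mul_comm]
  gcongr
  exact hmin (by simp [norm_smul, hz'.ne'])

theorem Matrix.PosDef.exists_norm_le_of_dotProduct_mulVec_le {N : Matrix ι ι ℝ} (hN : N.PosDef)
    (b : ι → ℝ) (c : ℝ) :
    ∃ K, ∀ z : ι → ℝ, z ⬝ᵥ N *ᵥ z ≤ c + 2 * (b ⬝ᵥ z) → ‖z‖ ≤ K := by
  obtain ⟨m, hm, hmN⟩ := hN.exists_pos_mul_sq_norm_le
  set B := ∑ i, |b i|
  have hB : 0 ≤ B := Finset.sum_nonneg fun i _ => abs_nonneg _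
  refine ⟨1 + (|c| + 2 * B) / m, fun z hz => ?_⟩
  have hquad : m * ‖z‖ ^ 2 ≤ |c| + 2 * B * ‖z‖ := by
    have := abs_le.mp (abs_dotProduct_le_sum_abs_mul_norm b z)
    linarith [hmN z, le_abs_self c]
  rw [← sub_le_iff_le_add', le_div_iff₀ hm]
  by_contra! h
  nlinarith [norm_nonneg z, abs_nonneg c]

end

theorem Matrix.sumElim_dotProduct_fromBlocks_mulVec_sumElim {R m n : Type*} [CommRing R]
    [Fintype m] [Fintype n] (A : Matrix m m R) (B : Matrix m n R) (D : Matrix n n R)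
    (x : m → R) (z : n → R) :
    (x ⊕ᵥ z) ⬝ᵥ fromBlocks A B Bᵀ D *ᵥ (x ⊕ᵥ z) =
      x ⬝ᵥ A *ᵥ x + 2 * ((Bᵀ *ᵥ x) ⬝ᵥ z) + z ⬝ᵥ D *ᵥ z := by
  simp only [fromBlocks_mulVec, Sum.elim_comp_inl, Sum.elim_comp_inr, sumElim_dotProduct_sumElim,
    dotProduct_add]
  rw [dotProduct_mulVec x B, ← mulVec_transpose, dotProduct_comm z]
  ring

theorem Matrix.PosSemidef.dotProduct_mulVec_mulVec_nonneg {m n : Type*} [Fintype m] [Fintype n]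
    {A : Matrix m n ℝ} {H : Matrix m m ℝ} (h : (Aᵀ * H * A).PosSemidef) (x : n → ℝ) :
    0 ≤ (A *ᵥ x) ⬝ᵥ H *ᵥ (A *ᵥ x) := by
  simpa [← mulVec_mulVec, dotProduct_mulVec _ Aᵀ, vecMul_transpose] using
    h.dotProduct_mulVec_nonneg x

theorem SH_bounded_general
    (n r : ℕ)
    (H11 : Matrix (Fin n) (Fin n) ℝ) (H12 : Matrix (Fin n) (Fin r) ℝ)
    (H22 : Matrix (Fin r) (Fin r) ℝ)
    (H : Matrix (Fin n ⊕ Fin r) (Fin n ⊕ Fin r) ℝ)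
    (hH : H = fromBlocks H11 H12 H12ᵀ H22)
    (hH22neg : (-H22).PosDef) :
    ∃ c : ℝ, ∀ Z : Matrix (Fin r) (Fin n) ℝ,
      ((fromRows (1 : Matrix (Fin n) (Fin n) ℝ) Z)ᵀ * H *
        fromRows 1 Z).PosSemidef →
      ∀ i j, |Z i j| ≤ c := by
  choose K hK using fun j : Fin n =>
    hH22neg.exists_norm_le_of_dotProduct_mulVec_le (H12ᵀ *ᵥ Pi.single j 1) (H11 j j)
  obtain ⟨c, hc⟩ := Finite.bddAbove_range K
  refine ⟨c, fun Z hZ i j => ?_⟩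
  have hcol := hZ.dotProduct_mulVec_mulVec_nonneg (Pi.single j 1)
  rw [fromRows_mulVec, one_mulVec, hH, sumElim_dotProduct_fromBlocks_mulVec_sumElim] at hcol
  have hdiag : Pi.single j 1 ⬝ᵥ H11 *ᵥ Pi.single j 1 = H11 j j := by simp
  have hZj : ‖Z *ᵥ Pi.single j 1‖ ≤ K j :=
    hK j _ (by rw [neg_mulVec, dotProduct_neg]; linarith)
  calc |Z i j| = ‖(Z *ᵥ Pi.single j 1) i‖ := by simp
    _ ≤ K j := (norm_le_pi_norm _ i).trans hZj
    _ ≤ c := hc ⟨j, rfl⟩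

/-- With `H22 ≺ 0`, the set `S_H` is bounded (entrywise, hence in any
matrix norm). -/
theorem SH_bounded
    (n r : ℕ)
    (H11 : Matrix (Fin n) (Fin n) ℝ) (H12 : Matrix (Fin n) (Fin r) ℝ)
    (H22 : Matrix (Fin r) (Fin r) ℝ)
    (hH11 : H11.IsSymm) (hH22 : H22.IsSymm)
    (H : Matrix (Fin n ⊕ Fin r) (Fin n ⊕ Fin r) ℝ)
    (hH : H = fromBlocks H11 H12 H12ᵀ H22)
    (hH22neg : (-H22).PosDef) :
    ∃ c : ℝ, ∀ Z : Matrix (Fin r) (Fin n) ℝ,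
      ((fromRows (1 : Matrix (Fin n) (Fin n) ℝ) Z)ᵀ * H *
        fromRows 1 Z).PosSemidef →
      ∀ i j, |Z i j| ≤ c :=
  SH_bounded_general n r H11 H12 H22 H hH hH22neg
end

section
/- Let P ∈ R^{2n×2n} be symmetric positive definite with block partition P = [[X̄, U],[U^T, M1]] and P^{-1} = [[Ȳ, V],[V^T, M2]] (all blocks n×n). If U is invertible, then V is invertible and V^T = U^{-1}(I - X̄Ȳ). -/
open Matrix

/-- If the off-diagonal block `U` of a partitioned positive definite `P`
is invertible, then the corresponding block `V` of `P⁻¹` is invertible and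
`Vᵀ = U⁻¹ (I - X̄Ȳ)`. -/
theorem block_V_invertible
    (n : ℕ)
    (X U M1 Y V M2 : Matrix (Fin n) (Fin n) ℝ)
    (P : Matrix (Fin n ⊕ Fin n) (Fin n ⊕ Fin n) ℝ)
    (hP : P = fromBlocks X U Uᵀ M1)
    (hPpd : P.PosDef)
    (hXsym : X.IsSymm) (hM1sym : M1.IsSymm)
    (hYsym : Y.IsSymm) (hM2sym : M2.IsSymm)
    (hinv : P * fromBlocks Y V Vᵀ M2 = 1)
    (hU : IsUnit U) :
    IsUnit V ∧ Vᵀ = U⁻¹ * (1 - X * Y) := by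
  subst hP
  rw [fromBlocks_multiply, ← fromBlocks_one] at hinv
  have e11 : X * Y + U * Vᵀ = 1 := congrArg Matrix.toBlocks₁₁ hinv
  have e12 : X * V + U * M2 = 0 := congrArg Matrix.toBlocks₁₂ hinv
  have e22 : Uᵀ * V + M1 * M2 = 1 := congrArg Matrix.toBlocks₂₂ hinv
  have hUiU : U⁻¹ * U = 1 := nonsing_inv_mul U ((isUnit_iff_isUnit_det U).mp hU)
  have hXV : X * V = -(U * M2) := by linear_combination (norm := noncomm_ring) e12
  have hleft : (Uᵀ - M1 * U⁻¹ * X) * V = 1 := by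
    have : M1 * U⁻¹ * (X * V) = -(M1 * M2) := by
      rw [hXV]
      simp only [Matrix.mul_neg, Matrix.mul_assoc]
      rw [← Matrix.mul_assoc U⁻¹ U M2, hUiU, Matrix.one_mul]
    calc (Uᵀ - M1 * U⁻¹ * X) * V = Uᵀ * V - M1 * U⁻¹ * (X * V) := by
          noncomm_ring
      _ = Uᵀ * V + M1 * M2 := by rw [this]; noncomm_ring
      _ = 1 := e22
  refine ⟨(isUnit_iff_isUnit_det V).mpr (Matrix.isUnit_det_of_left_inverse hleft), ?_⟩
  have : U * Vᵀ = 1 - X * Y := by linear_combination (norm := noncomm_ring) e11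
  calc Vᵀ = U⁻¹ * (U * Vᵀ) := by rw [← Matrix.mul_assoc, hUiU, Matrix.one_mul]
    _ = U⁻¹ * (1 - X * Y) := by rw [this]
end
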